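/- arXiv:1802.04923 — 2 statements merged into one kernel-verified Lean document; each statement's English description precedes it below -/
import Mathlib

section
/- Let M ≥ 1, let b ∈ ℂ^M have |b_k| = 1 for all k, and let x ∈ X be a vector in the one-bit alphabet. Set A = Σ_{k=1}^{M} conj(b_k)·x_k and suppose A ≠ 0, the phase φ_A = arg(A) is nondegenerate, and x ≠ x(φ_A). Then there exists x' ∈ X (obtained from x by changing a single coordinate) with |Σ_{k=1}^{M} conj(b_k)·x'_k| > |A|. -/
/-!
Multiplying by `e^{-i φ_A}` turns `A` into the positive real `|A|`. Replacing a coordinate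
`x_n ≠ x(φ_A)_n` by `x(φ_A)_n = sign(c)/√2`, with `c = b_n e^{i φ_A}`, adds
`conj(c)·(x(φ_A)_n − x_n)` to the rotated sum. Every entry `w` of the alphabet is `sign(w)/√2`,
and `Re(conj(c)·sign(w)) = Re c·sgn(Re w) + Im c·sgn(Im w)` is maximal exactly for
`sign(w) = sign(c)` when `Re c, Im c ≠ 0`. So the real part, hence the modulus, of the rotated
sum grows strictly.
-/

/-- `sgn t = 1` if `t > 0` and `-1` otherwise. -/
noncomputable def sgn (t : ℝ) : ℝ := if 0 < t then 1 else -1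

/-- One-bit complex sign: `sign(c) = sgn(Re c) + i·sgn(Im c)`. -/
noncomputable def csign (c : ℂ) : ℂ := (sgn c.re : ℂ) + (sgn c.im : ℂ) * Complex.I

/-- `φ` is nondegenerate for `b` if `Re(b_k e^{iφ}) ≠ 0` and `Im(b_k e^{iφ}) ≠ 0` for all `k`. -/
def Nondeg {M : ℕ} (b : Fin M → ℂ) (φ : ℝ) : Prop :=
  ∀ k, (b k * Complex.exp (φ * Complex.I)).re ≠ 0 ∧
    (b k * Complex.exp (φ * Complex.I)).im ≠ 0

/-- The one-bit beamforming vector `x(φ)_k = (1/√2)·sign(b_k e^{iφ})`. -/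
noncomputable def xphi {M : ℕ} (b : Fin M → ℂ) (φ : ℝ) : Fin M → ℂ :=
  fun k => ((1 / Real.sqrt 2 : ℝ) : ℂ) * csign (b k * Complex.exp (φ * Complex.I))

/-- The one-bit alphabet `X = {x : x_k ∈ {(±1 ± i)/√2} for all k}`. -/
noncomputable def oneBit (M : ℕ) : Set (Fin M → ℂ) :=
  {x | ∀ k, x k ∈ ({(1 + Complex.I) / Real.sqrt 2, (1 - Complex.I) / Real.sqrt 2,
    (-1 + Complex.I) / Real.sqrt 2, (-1 - Complex.I) / Real.sqrt 2} : Set ℂ)}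

open Complex
open scoped ComplexConjugate

def oneBitAlphabet : Set ℂ :=
  {(1 + I) / Real.sqrt 2, (1 - I) / Real.sqrt 2, (-1 + I) / Real.sqrt 2, (-1 - I) / Real.sqrt 2}

theorem sgn_eq_one_or_neg_one (t : ℝ) : sgn t = 1 ∨ sgn t = -1 := by
  unfold sgn; split_ifs <;> simp

theorem mul_sgn_le_mul_sgn_self (p q : ℝ) : p * sgn q ≤ p * sgn p := by
  unfold sgn; split_ifs <;> linarith

theorem mul_sgn_lt_mul_sgn_self {p q : ℝ} (hp : p ≠ 0) (h : sgn q ≠ sgn p) :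
    p * sgn q < p * sgn p := by
  unfold sgn at *
  rcases hp.lt_or_gt with hp | hp <;> split_ifs at * <;> first | contradiction | linarith

theorem ofReal_mul_csign_mem_oneBitAlphabet (c : ℂ) :
    ((1 / √2 : ℝ) : ℂ) * csign c ∈ oneBitAlphabet := by
  unfold csign oneBitAlphabet
  rcases sgn_eq_one_or_neg_one c.re with h | h <;>
    rcases sgn_eq_one_or_neg_one c.im with h' | h' <;>
    simp [h, h', div_eq_inv_mul, sub_eq_add_neg, mul_add]

theorem eq_ofReal_mul_csign_of_mem_oneBitAlphabet {w : ℂ} (hw : w ∈ oneBitAlphabet) :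
    w = ((1 / √2 : ℝ) : ℂ) * csign w := by
  have h2 : (0 : ℝ) < √2 := by positivity
  rcases hw with rfl | rfl | rfl | rfl <;>
    simp [csign, sgn, Complex.ext_iff, h2, div_eq_inv_mul, sub_eq_add_neg]

theorem xphi_mem_oneBit {M : ℕ} (b : Fin M → ℂ) (φ : ℝ) : xphi b φ ∈ oneBit M :=
  fun _ => ofReal_mul_csign_mem_oneBitAlphabet _

theorem update_mem_oneBit {M : ℕ} {x y : Fin M → ℂ} (hx : x ∈ oneBit M) (hy : y ∈ oneBit M)
    (n : Fin M) : Function.update x n (y n) ∈ oneBit M := by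
  intro k
  rcases eq_or_ne k n with rfl | hk
  · simpa using hy k
  · simpa [hk] using hx k

theorem re_conj_mul_csign (c w : ℂ) :
    (conj c * csign w).re = c.re * sgn w.re + c.im * sgn w.im := by
  simp [csign]

theorem re_conj_mul_csign_lt {c w : ℂ} (hre : c.re ≠ 0) (him : c.im ≠ 0)
    (h : csign w ≠ csign c) : (conj c * csign w).re < (conj c * csign c).re := by
  rw [re_conj_mul_csign, re_conj_mul_csign]
  have hsgn : sgn w.re ≠ sgn c.re ∨ sgn w.im ≠ sgn c.im := by
    by_contra! h'
    exact h (by rw [csign, csign, h'.1, h'.2])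
  rcases hsgn with hs | hs
  · linarith [mul_sgn_lt_mul_sgn_self hre hs, mul_sgn_le_mul_sgn_self c.im w.im]
  · linarith [mul_sgn_le_mul_sgn_self c.re w.re, mul_sgn_lt_mul_sgn_self him hs]

theorem sum_mul_update {ι R : Type*} [Fintype ι] [DecidableEq ι] [CommRing R] (g x : ι → R)
    (n : ι) (v : R) :
    ∑ k, g k * Function.update x n v k = ∑ k, g k * x k + g n * (v - x n) := by
  have h : ∀ k, g k * Function.update x n v k =
      g k * x k + (Pi.single n (g n * (v - x n)) : ι → R) k := by
    intro k
    rcases eq_or_ne k n with rfl | hk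
    · simp only [Function.update_self, Pi.single_eq_same]; ring
    · simp [hk]
  simp [h, Finset.sum_add_distrib]

theorem mul_conj_exp_arg_mul_I (A : ℂ) : A * conj (exp (A.arg * I)) = ‖A‖ := by
  nth_rewrite 1 [← norm_mul_exp_arg_mul_I A]
  rw [mul_assoc, mul_conj, normSq_eq_norm_sq, norm_exp_ofReal_mul_I]
  simp

theorem norm_lt_norm_add_of_re_pos {A d : ℂ} (h : 0 < (d * conj (exp (A.arg * I))).re) :
    ‖A‖ < ‖A + d‖ :=
  calc ‖A‖ < ‖A‖ + (d * conj (exp (A.arg * I))).re := by linarith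
    _ = ((A + d) * conj (exp (A.arg * I))).re := by
      rw [add_mul, mul_conj_exp_arg_mul_I, add_re, ofReal_re]
    _ ≤ ‖(A + d) * conj (exp (A.arg * I))‖ := re_le_norm _
    _ = ‖A + d‖ := by rw [norm_mul, norm_conj, norm_exp_ofReal_mul_I, mul_one]

theorem exists_single_coordinate_improvement_general (M : ℕ) (b : Fin M → ℂ)
    (x : Fin M → ℂ) (hx : x ∈ oneBit M)
    (hnd : Nondeg b (∑ k, (starRingEnd ℂ) (b k) * x k).arg)
    (hne : x ≠ xphi b (∑ k, (starRingEnd ℂ) (b k) * x k).arg) :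
    ∃ x' ∈ oneBit M, (∃ n, ∀ k, k ≠ n → x' k = x k) ∧
      ‖∑ k, (starRingEnd ℂ) (b k) * x' k‖
        > ‖∑ k, (starRingEnd ℂ) (b k) * x k‖ := by
  set A := ∑ k, conj (b k) * x k
  obtain ⟨n, hn⟩ := Function.ne_iff.mp hne
  set c := b n * exp (A.arg * I)
  have hx_n := eq_ofReal_mul_csign_of_mem_oneBitAlphabet (hx n)
  have hcsign : csign (x n) ≠ csign c := fun h => hn (by rw [hx_n, h]; rfl)
  have hgain : 0 < (conj c * (xphi b A.arg n - x n)).re := by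
    rw [hx_n, xphi, ← mul_sub, mul_left_comm, re_ofReal_mul, mul_sub, sub_re]
    exact mul_pos (by positivity)
      (sub_pos.2 (re_conj_mul_csign_lt (hnd n).1 (hnd n).2 hcsign))
  refine ⟨Function.update x n (xphi b A.arg n), update_mem_oneBit hx (xphi_mem_oneBit b _) n,
    ⟨n, fun k hk => Function.update_of_ne hk _ _⟩, ?_⟩
  rw [sum_mul_update]
  apply norm_lt_norm_add_of_re_pos
  rwa [mul_right_comm, ← map_mul]

/-- If `x ∈ X`, `A = Σ_k conj(b_k)·x_k ≠ 0`, `φ_A = arg A` is nondegenerate and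
`x ≠ x(φ_A)`, then changing a single coordinate of `x` yields `x' ∈ X` with
`|Σ_k conj(b_k)·x'_k| > |A|`. -/
theorem exists_single_coordinate_improvement (M : ℕ) (hM : 1 ≤ M) (b : Fin M → ℂ)
    (hb : ∀ k, ‖b k‖ = 1) (x : Fin M → ℂ) (hx : x ∈ oneBit M)
    (hA : (∑ k, (starRingEnd ℂ) (b k) * x k) ≠ 0)
    (hnd : Nondeg b (∑ k, (starRingEnd ℂ) (b k) * x k).arg)
    (hne : x ≠ xphi b (∑ k, (starRingEnd ℂ) (b k) * x k).arg) :
    ∃ x' ∈ oneBit M, (∃ n, ∀ k, k ≠ n → x' k = x k) ∧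
      ‖∑ k, (starRingEnd ℂ) (b k) * x' k‖
        > ‖∑ k, (starRingEnd ℂ) (b k) * x k‖ :=
  exists_single_coordinate_improvement_general M b x hx hnd hne
end

section
/- Let t ∈ ℂ with |t| = 1. Then the function φ ↦ Re(e^{−iφ}·conj(t)·(1/√2)·sign(t·e^{iφ})), which is defined for all but finitely many φ in [0, 2π], satisfies ∫_0^{2π} Re(e^{−iφ}·conj(t)·(1/√2)·sign(t·e^{iφ})) dφ = 4√2. -/
lemma sgn_mul_self (x : ℝ) : sgn x * x = |x| := by
  unfold sgn
  split_ifs with hx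
  · rw [one_mul, abs_of_pos hx]
  · rw [abs_of_nonpos (not_lt.mp hx)]; ring

section Real

open Real

lemma periodic_abs_cos_add_abs_sin : Function.Periodic (fun x ↦ |cos x| + |sin x|) (π / 2) := by
  intro x
  simp only [cos_add_pi_div_two, sin_add_pi_div_two, abs_neg, add_comm]

lemma integral_abs_cos_add_abs_sin_zero_pi_div_two :
    ∫ x in (0 : ℝ)..π / 2, |cos x| + |sin x| = 2 := by
  have hquarter : ∀ x ∈ Set.uIcc 0 (π / 2), |cos x| + |sin x| = cos x + sin x := by
    intro x hx
    rw [Set.uIcc_of_le (by positivity)] at hx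
    rw [abs_of_nonneg (cos_nonneg_of_mem_Icc ⟨by linarith [hx.1, pi_pos], hx.2⟩),
      abs_of_nonneg (sin_nonneg_of_nonneg_of_le_pi hx.1 (by linarith [hx.2, pi_pos]))]
  rw [intervalIntegral.integral_congr hquarter, intervalIntegral.integral_add
    (continuous_cos.intervalIntegrable _ _) (continuous_sin.intervalIntegrable _ _),
    integral_cos, integral_sin]
  norm_num

lemma integral_abs_cos_add_abs_sin (θ : ℝ) :
    ∫ x in θ..θ + 2 * π, |cos x| + |sin x| = 8 := by
  have hcont : Continuous fun x ↦ |cos x| + |sin x| := by fun_prop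
  have hquarters := periodic_abs_cos_add_abs_sin.intervalIntegral_add_zsmul_eq 4 θ
    fun _ _ ↦ hcont.intervalIntegrable _ _
  rw [show (4 : ℤ) • (π / 2) = 2 * π by norm_num; ring] at hquarters
  rw [hquarters, periodic_abs_cos_add_abs_sin.intervalIntegral_add_eq θ 0, zero_add,
    integral_abs_cos_add_abs_sin_zero_pi_div_two]
  norm_num

end Real

open Complex ComplexConjugate

lemma re_conj_mul_csign_s8 (z : ℂ) : (conj z * csign z).re = |z.re| + |z.im| := by
  simp only [csign, mul_re, mul_im, add_re, add_im, conj_re, conj_im, ofReal_re, ofReal_im,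
    I_re, I_im]
  rw [← sgn_mul_self z.re, ← sgn_mul_self z.im]
  ring

lemma conj_exp_ofReal_mul_I (x : ℝ) : conj (exp (x * I)) = exp (-x * I) := by
  rw [← exp_conj, map_mul, conj_ofReal, conj_I, neg_mul, mul_neg]

/-- For unit-modulus `t`, the average over a full period of the aligned real part of the
one-bit sign of `t·e^{iφ}` gives `∫_0^{2π} Re(e^{−iφ}·conj(t)·(1/√2)·sign(t e^{iφ})) dφ = 4√2`. -/
theorem integral_aligned_csign (t : ℂ) (ht : ‖t‖ = 1) :
    ∫ φ in (0 : ℝ)..(2 * Real.pi),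
      (Complex.exp (-(φ : ℂ) * Complex.I) * (starRingEnd ℂ) t *
        (((1 / Real.sqrt 2 : ℝ) : ℂ) * csign (t * Complex.exp (φ * Complex.I)))).re
      = 4 * Real.sqrt 2 := by
  obtain ⟨θ, rfl⟩ : ∃ θ : ℝ, exp (θ * I) = t :=
    ⟨t.arg, by simpa [ht] using norm_mul_exp_arg_mul_I t⟩
  have hintegrand : ∀ φ : ℝ,
      (exp (-(φ : ℂ) * I) * conj (exp (θ * I)) *
          (((1 / √2 : ℝ) : ℂ) * csign (exp (θ * I) * exp (φ * I)))).re
        = 1 / √2 * (|Real.cos (θ + φ)| + |Real.sin (θ + φ)|) := by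
    intro φ
    rw [← conj_exp_ofReal_mul_I, ← map_mul, mul_comm (exp _), mul_left_comm, re_ofReal_mul,
      re_conj_mul_csign_s8, ← exp_add, ← add_mul, ← ofReal_add, exp_ofReal_mul_I_re,
      exp_ofReal_mul_I_im]
  simp_rw [hintegrand, intervalIntegral.integral_const_mul,
    intervalIntegral.integral_comp_add_left (fun x ↦ |Real.cos x| + |Real.sin x|), add_zero,
    integral_abs_cos_add_abs_sin]
  field_simp
  norm_num
end
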